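/- arXiv:1708.09798 — 11 statements merged into one kernel-verified Lean document; each statement's English description precedes it below -/
import Mathlib

section
/- The cycle C₅ does not admit a J-coloring. -/
set_option maxRecDepth 4000


open SimpleGraph

/-- A proper colouring with `k` colours. -/
def IsProperCol {V : Type*} (G : SimpleGraph V) {k : ℕ} (c : V → Fin k) : Prop :=
  ∀ ⦃x y⦄, G.Adj x y → c x ≠ c y

/-- Every vertex belongs to a rainbow neighbourhood: its closed neighbourhood
meets every colour class. -/
def IsRainbowCol {V : Type*} (G : SimpleGraph V) {k : ℕ} (c : V → Fin k) : Prop :=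
  ∀ v (i : Fin k), ∃ u, (u = v ∨ G.Adj v u) ∧ c u = i

/-- `G` admits a J-colouring. -/
def JColorable {V : Type*} (G : SimpleGraph V) : Prop :=
  ∃ (k : ℕ) (c : V → Fin k), IsProperCol G c ∧ IsRainbowCol G c

/-- The J-colouring number of `G` is `k`: there is a proper rainbow colouring with `k`
colours, and `k` is maximal with this property. -/
def JNum {V : Type*} (G : SimpleGraph V) (k : ℕ) : Prop :=
  (∃ c : V → Fin k, IsProperCol G c ∧ IsRainbowCol G c) ∧
    ∀ m, (∃ c : V → Fin m, IsProperCol G c ∧ IsRainbowCol G c) → m ≤ k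

/-- The Mycielskian of `G`: vertices `Sum.inl i = vᵢ`, `Sum.inr (Sum.inl i) = uᵢ`,
`Sum.inr (Sum.inr ()) = w`. -/
def mycielskian {V : Type*} (G : SimpleGraph V) : SimpleGraph (V ⊕ V ⊕ Unit) :=
  SimpleGraph.fromRel (fun a b => match a, b with
    | Sum.inl i, Sum.inl j => G.Adj i j
    | Sum.inl i, Sum.inr (Sum.inl j) => G.Adj i j
    | Sum.inr (Sum.inl _), Sum.inr (Sum.inr _) => True
    | _, _ => False)

/-- The cycle `C₅` does not admit a J-colouring. -/
theorem C5_not_JColorable : ¬ JColorable (cycleGraph 5) := by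
  rintro ⟨k, c, hp, hr⟩
  -- every colour appears in the closed neighbourhood N[0] = {0, 1, 4}
  have hk : k ≤ 3 := by
    have hsub : (Finset.univ : Finset (Fin k)) ⊆ {c 0, c 1, c 4} := by
      intro i _
      obtain ⟨u, hu, hcu⟩ := hr 0 i
      have : u = 0 ∨ u = 1 ∨ u = 4 := by
        rcases hu with h | h
        · exact Or.inl h
        · rw [cycleGraph_adj] at h
          fin_cases u <;> revert h <;> decide
      subst hcu
      rcases this with h | h | h <;> subst h <;> simp
    calc k = Finset.univ.card := (Finset.card_fin k).symm
      _ ≤ ({c 0, c 1, c 4} : Finset (Fin k)).card := Finset.card_le_card hsub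
      _ ≤ 3 := le_trans (Finset.card_insert_le _ _) (Nat.succ_le_succ
          (le_trans (Finset.card_insert_le _ _) (by simp)))
  interval_cases k
  · exact (c 0).elim0
  · exact hp (show (cycleGraph 5).Adj 0 1 by decide) (Subsingleton.elim _ _)
  · revert hp hr
    have : ∀ c : Fin 5 → Fin 2, (∀ ⦃x y⦄, (cycleGraph 5).Adj x y → c x ≠ c y) →
        ¬ ∀ v i, ∃ u, (u = v ∨ (cycleGraph 5).Adj v u) ∧ c u = i := by decide
    exact fun hp hr => this c hp hr
  · revert hp hr
    have : ∀ c : Fin 5 → Fin 3, (∀ ⦃x y⦄, (cycleGraph 5).Adj x y → c x ≠ c y) →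
        ¬ ∀ v i, ∃ u, (u = v ∨ (cycleGraph 5).Adj v u) ∧ c u = i := by decide
    exact fun hp hr => this c hp hr
end

section
/- For any graph G admitting a J-coloring, the Mycielskian μ(G) does not admit a J-coloring. -/
open SimpleGraph

/-- For any graph `G` admitting a J-colouring, the Mycielskian `μ(G)` does not admit a
J-colouring. -/
theorem mycielskian_not_JColorable {V : Type*} [Nonempty V] (G : SimpleGraph V)
    (h : JColorable G) : ¬ JColorable (mycielskian G) := by
  rintro ⟨k, c, hp, hr⟩
  -- adjacency constructors
  have avv : ∀ {i j : V}, G.Adj i j →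
      (mycielskian G).Adj (Sum.inl i) (Sum.inl j) := fun {i j} hij =>
    (SimpleGraph.fromRel_adj _ _ _).mpr ⟨by simp [hij.ne], Or.inl hij⟩
  have avu : ∀ {i j : V}, G.Adj i j →
      (mycielskian G).Adj (Sum.inl i) (Sum.inr (Sum.inl j)) := fun {i j} hij =>
    (SimpleGraph.fromRel_adj _ _ _).mpr ⟨by simp, Or.inl hij⟩
  have auw : ∀ i : V,
      (mycielskian G).Adj (Sum.inr (Sum.inl i)) (Sum.inr (Sum.inr ())) := fun i =>
    (SimpleGraph.fromRel_adj _ _ _).mpr ⟨by simp, Or.inl trivial⟩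
  -- adjacency destructors
  have dvv : ∀ {i j : V}, (mycielskian G).Adj (Sum.inl i) (Sum.inl j) → G.Adj i j := by
    intro i j hadj
    rw [mycielskian, SimpleGraph.fromRel_adj] at hadj
    rcases hadj with ⟨-, h1 | h1⟩
    · exact h1
    · exact h1.symm
  have dvu : ∀ {i j : V}, (mycielskian G).Adj (Sum.inl i) (Sum.inr (Sum.inl j)) → G.Adj i j := by
    intro i j hadj
    rw [mycielskian, SimpleGraph.fromRel_adj] at hadj
    rcases hadj with ⟨-, h1 | h1⟩
    · exact h1
    · exact h1.elim
  have dvw : ∀ {i : V} {u : Unit},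
      ¬ (mycielskian G).Adj (Sum.inl i) (Sum.inr (Sum.inr u)) := by
    intro i u hadj
    rw [mycielskian, SimpleGraph.fromRel_adj] at hadj
    rcases hadj with ⟨-, h1 | h1⟩
    · exact h1.elim
    · exact h1.elim
  have duu : ∀ {i j : V},
      ¬ (mycielskian G).Adj (Sum.inr (Sum.inl i)) (Sum.inr (Sum.inl j)) := by
    intro i j hadj
    rw [mycielskian, SimpleGraph.fromRel_adj] at hadj
    rcases hadj with ⟨-, h1 | h1⟩
    · exact h1.elim
    · exact h1.elim
  -- every u-vertex avoids the colour of w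
  have hu_ne_a : ∀ i : V, c (Sum.inr (Sum.inl i)) ≠ c (Sum.inr (Sum.inr ())) :=
    fun i => hp (auw i)
  -- key lemma: if v_i is not coloured a, then u_i has the same colour as v_i
  have L1 : ∀ i : V, c (Sum.inl i) ≠ c (Sum.inr (Sum.inr ())) →
      c (Sum.inr (Sum.inl i)) = c (Sum.inl i) := by
    intro i hi
    obtain ⟨x, hx, hcx⟩ := hr (Sum.inr (Sum.inl i)) (c (Sum.inl i))
    rcases x with j | j | u
    · rcases hx with h' | hadj
      · exact absurd h' (by simp)
      · -- u_i adjacent to v_j means G.Adj i j, so v_j and v_i are adjacent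
        have hij : G.Adj j i := by
          rw [mycielskian, SimpleGraph.fromRel_adj] at hadj
          rcases hadj with ⟨-, h1 | h1⟩
          · exact h1.elim
          · exact h1
        exact absurd hcx (hp (avv hij))
    · rcases hx with h' | hadj
      · rw [h'] at hcx; exact hcx
      · exact absurd hadj duu
    · rcases hx with h' | hadj
      · exact absurd h' (by simp)
      · cases u
        exact absurd hcx (Ne.symm hi)
  -- there is a v-vertex coloured a
  obtain ⟨i0⟩ := ‹Nonempty V›
  obtain ⟨j, hj⟩ : ∃ j : V, c (Sum.inl j) = c (Sum.inr (Sum.inr ())) := by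
    obtain ⟨x, hx, hcx⟩ := hr (Sum.inl i0) (c (Sum.inr (Sum.inr ())))
    rcases x with j | j | u
    · exact ⟨j, hcx⟩
    · rcases hx with h' | hadj
      · exact absurd h' (by simp)
      · exact absurd hcx (hu_ne_a j)
    · rcases hx with h' | hadj
      · cases u; exact ⟨i0, by rw [← h']⟩
      · exact absurd hadj dvw
  -- final contradiction
  have hb : c (Sum.inr (Sum.inl j)) ≠ c (Sum.inr (Sum.inr ())) := hu_ne_a j
  obtain ⟨x, hx, hcx⟩ := hr (Sum.inl j) (c (Sum.inr (Sum.inl j)))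
  rcases x with m | m | u
  · -- x = v_m
    rcases hx with h' | hadj
    · rw [h', hj] at hcx; exact hb hcx.symm
    · have hjm : G.Adj j m := dvv hadj
      exact hp (avu hjm.symm) hcx
  · -- x = u_m
    rcases hx with h' | hadj
    · exact absurd h' (by simp)
    · have hjm : G.Adj j m := dvu hadj
      have hvm : c (Sum.inl m) ≠ c (Sum.inr (Sum.inr ())) := by
        intro hm
        exact hp (avv hjm) (hj.trans hm.symm)
      have := L1 m hvm
      rw [this] at hcx
      exact hp (avu hjm.symm) hcx
  · -- x = w
    cases u; exact hb hcx.symm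
end

section
/- If G is a J-colorable graph with J-coloring number k, then the crib graph c(G) is J-colorable with J-coloring number k+1. -/
open SimpleGraph

/-- The crib graph of `G`: the Mycielskian together with edges `vᵢw`. -/
def crib {V : Type*} (G : SimpleGraph V) : SimpleGraph (V ⊕ V ⊕ Unit) :=
  SimpleGraph.fromRel (fun a b => match a, b with
    | Sum.inl i, Sum.inl j => G.Adj i j
    | Sum.inl i, Sum.inr (Sum.inl j) => G.Adj i j
    | Sum.inl _, Sum.inr (Sum.inr _) => True
    | Sum.inr (Sum.inl _), Sum.inr (Sum.inr _) => True
    | _, _ => False)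

section Aux

variable {V : Type*} {G : SimpleGraph V}

lemma crib_adj_vv {i j : V} (h : G.Adj i j) :
    (crib G).Adj (Sum.inl i) (Sum.inl j) := by
  refine ⟨by simpa using h.ne, Or.inl ?_⟩
  exact h

lemma crib_adj_vu {i j : V} (h : G.Adj i j) :
    (crib G).Adj (Sum.inl i) (Sum.inr (Sum.inl j)) := by
  exact ⟨by simp, Or.inl h⟩

lemma crib_adj_vw (i : V) :
    (crib G).Adj (Sum.inl i) (Sum.inr (Sum.inr ())) := by
  exact ⟨by simp, Or.inl trivial⟩

lemma crib_adj_uw (i : V) :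
    (crib G).Adj (Sum.inr (Sum.inl i)) (Sum.inr (Sum.inr ())) := by
  exact ⟨by simp, Or.inl trivial⟩

/-- Adjacency of `u_i` in the crib graph: only `w` and `v_j` for `j ~ i`. -/
lemma crib_adj_u {i : V} {x : V ⊕ V ⊕ Unit}
    (h : (crib G).Adj (Sum.inr (Sum.inl i)) x) :
    x = Sum.inr (Sum.inr ()) ∨ ∃ j, G.Adj i j ∧ x = Sum.inl j := by
  obtain ⟨-, h | h⟩ := h
  · match x with
    | Sum.inl j => exact absurd h not_false
    | Sum.inr (Sum.inl j) => exact absurd h not_false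
    | Sum.inr (Sum.inr ()) => exact Or.inl rfl
  · match x with
    | Sum.inl j => exact Or.inr ⟨j, h.symm, rfl⟩
    | Sum.inr (Sum.inl j) => exact absurd h not_false
    | Sum.inr (Sum.inr ()) => exact absurd h not_false

/-- Key lemma: in any proper rainbow colouring `d` of the crib graph,
`d u_i = d v_i`. -/
lemma crib_u_eq_v {m : ℕ} {d : V ⊕ V ⊕ Unit → Fin m}
    (hp : IsProperCol (crib G) d) (hr : IsRainbowCol (crib G) d) (i : V) :
    d (Sum.inr (Sum.inl i)) = d (Sum.inl i) := by
  obtain ⟨x, hx, hcx⟩ := hr (Sum.inr (Sum.inl i)) (d (Sum.inl i))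
  rcases hx with rfl | hx
  · exact hcx
  · rcases crib_adj_u hx with rfl | ⟨j, hj, rfl⟩
    · exact absurd hcx.symm (hp (crib_adj_vw i))
    · exact absurd hcx.symm (hp (crib_adj_vv hj))

/-- In any proper rainbow colouring of the crib graph, every colour other than
`d w` occurs on the closed `v`-neighbourhood of each `v_i`. -/
lemma crib_color_on_v {m : ℕ} {d : V ⊕ V ⊕ Unit → Fin m}
    (hp : IsProperCol (crib G) d) (hr : IsRainbowCol (crib G) d) (i : V)
    (t : Fin m) (ht : t ≠ d (Sum.inr (Sum.inr ()))) :
    ∃ l, (l = i ∨ G.Adj i l) ∧ d (Sum.inl l) = t := by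
  obtain ⟨x, hx, hcx⟩ := hr (Sum.inr (Sum.inl i)) t
  rcases hx with rfl | hx
  · exact ⟨i, Or.inl rfl, by rw [← hcx, crib_u_eq_v hp hr]⟩
  · rcases crib_adj_u hx with rfl | ⟨j, hj, rfl⟩
    · exact absurd hcx.symm ht
    · exact ⟨j, Or.inr hj, hcx⟩

/-- The canonical `(k+1)`-colouring of the crib graph induced by `c`. -/
def cribCol {V : Type*} {k : ℕ} (c : V → Fin k) : V ⊕ V ⊕ Unit → Fin (k + 1)
  | Sum.inl i => (c i).castSucc
  | Sum.inr (Sum.inl i) => (c i).castSucc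
  | Sum.inr (Sum.inr _) => Fin.last k

end Aux

/-- If `G` is J-colourable with J-colouring number `k`, then the crib graph `c(G)` is
J-colourable with J-colouring number `k + 1`. -/
theorem crib_JNum {V : Type*} (G : SimpleGraph V) (k : ℕ) (h : JNum G k) :
    JColorable (crib G) ∧ JNum (crib G) (k + 1) := by
  obtain ⟨⟨c, hcp, hcr⟩, hmax⟩ := h
  -- V is nonempty
  have hV : Nonempty V := by
    by_contra hV
    rw [not_nonempty_iff] at hV
    have := hmax (k + 1) ⟨fun v => isEmptyElim v, fun x y hxy => isEmptyElim x,
      fun v => isEmptyElim v⟩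
    omega
  obtain ⟨v0⟩ := hV
  have hDp : IsProperCol (crib G) (cribCol c) := by
    have key : ∀ x y : V ⊕ V ⊕ Unit, cribCol c x = cribCol c y →
        ¬ (match x, y with
          | Sum.inl i, Sum.inl j => G.Adj i j
          | Sum.inl i, Sum.inr (Sum.inl j) => G.Adj i j
          | Sum.inl _, Sum.inr (Sum.inr _) => True
          | Sum.inr (Sum.inl _), Sum.inr (Sum.inr _) => True
          | _, _ => False) := by
      rintro (i | i | u) (j | j | u') e <;> simp only [cribCol] at e
      · exact fun hxy => hcp hxy (Fin.castSucc_injective _ e)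
      · exact fun hxy => hcp hxy (Fin.castSucc_injective _ e)
      · exact fun _ => (Fin.castSucc_lt_last (c i)).ne e
      · exact not_false
      · exact not_false
      · exact fun _ => (Fin.castSucc_lt_last (c i)).ne e
      · exact not_false
      · exact not_false
      · exact not_false
    rintro x y ⟨hne', hxy | hxy⟩ e
    · exact key x y e hxy
    · exact key y x e.symm hxy
  have hDr : IsRainbowCol (crib G) (cribCol c) := by
    intro x t
    rcases Fin.eq_castSucc_or_eq_last t with ⟨s, rfl⟩ | rfl
    · match x with
      | Sum.inl i =>
        obtain ⟨l, hl | hl, hcl⟩ := hcr i s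
        · exact ⟨Sum.inl l, Or.inl (by rw [hl]), by simp [cribCol, hcl]⟩
        · exact ⟨Sum.inl l, Or.inr (crib_adj_vv hl), by simp [cribCol, hcl]⟩
      | Sum.inr (Sum.inl i) =>
        obtain ⟨l, hl | hl, hcl⟩ := hcr i s
        · subst hl
          exact ⟨Sum.inr (Sum.inl l), Or.inl rfl, by simp [cribCol, hcl]⟩
        · exact ⟨Sum.inl l, Or.inr ((crib_adj_vu hl.symm).symm),
            by simp [cribCol, hcl]⟩
      | Sum.inr (Sum.inr u) =>
        obtain ⟨l, -, hcl⟩ := hcr v0 s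
        exact ⟨Sum.inl l, Or.inr (by cases u; exact (crib_adj_vw l).symm),
          by simp [cribCol, hcl]⟩
    · match x with
      | Sum.inl i => exact ⟨Sum.inr (Sum.inr ()), Or.inr (crib_adj_vw i), rfl⟩
      | Sum.inr (Sum.inl i) =>
        exact ⟨Sum.inr (Sum.inr ()), Or.inr (crib_adj_uw i), rfl⟩
      | Sum.inr (Sum.inr u) => exact ⟨Sum.inr (Sum.inr u), Or.inl rfl, rfl⟩
  refine ⟨⟨k + 1, cribCol c, hDp, hDr⟩, ⟨cribCol c, hDp, hDr⟩, ?_⟩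
  -- upper bound
  rintro m ⟨d, hdp, hdr⟩
  match m with
  | 0 => exact (d (Sum.inr (Sum.inr ()))).elim0
  | m + 1 =>
    refine Nat.succ_le_succ (hmax m ?_)
    set w0 : Fin (m + 1) := d (Sum.inr (Sum.inr ())) with hw0
    have hne : ∀ i : V, d (Sum.inl i) ≠ w0 := fun i => hdp (crib_adj_vw i)
    choose c' hc' using fun i => Fin.exists_succAbove_eq (hne i)
    refine ⟨c', fun x y hxy e => hdp (crib_adj_vv hxy) ?_, fun i s => ?_⟩
    · rw [← hc' x, ← hc' y, e]
    · obtain ⟨l, hl, hdl⟩ := crib_color_on_v hdp hdr i (w0.succAbove s)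
        (Fin.succAbove_ne w0 s)
      refine ⟨l, hl, Fin.succAbove_right_injective (p := w0) ?_⟩
      rw [hc' l, hdl]
end

section
/- If G is a J-colorable graph, then its shadow graph s(G) is J-colorable and has the same J-coloring number: J(s(G)) = J(G). -/
open SimpleGraph

/-- The shadow graph of `G`: the Mycielskian with the root vertex removed. -/
def shadow {V : Type*} (G : SimpleGraph V) : SimpleGraph (V ⊕ V) :=
  SimpleGraph.fromRel (fun a b => match a, b with
    | Sum.inl i, Sum.inl j => G.Adj i j
    | Sum.inl i, Sum.inr j => G.Adj i j
    | _, _ => False)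

section Aux
variable {V : Type*} (G : SimpleGraph V)

lemma shadow_adj_ll {i j : V} : (shadow G).Adj (Sum.inl i) (Sum.inl j) ↔ G.Adj i j := by
  simp only [shadow, SimpleGraph.fromRel_adj]
  constructor
  · rintro ⟨-, h | h⟩
    · exact h
    · exact h.symm
  · intro h
    exact ⟨by simpa using h.ne, Or.inl h⟩

lemma shadow_adj_lr {i j : V} : (shadow G).Adj (Sum.inl i) (Sum.inr j) ↔ G.Adj i j := by
  simp only [shadow, SimpleGraph.fromRel_adj]
  constructor
  · rintro ⟨-, h | h⟩
    · exact h
    · exact h.elim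
  · intro h
    exact ⟨by simp, Or.inl h⟩

lemma shadow_adj_rl {i j : V} : (shadow G).Adj (Sum.inr i) (Sum.inl j) ↔ G.Adj j i := by
  constructor
  · intro h; exact (shadow_adj_lr G).mp h.symm
  · intro h; exact ((shadow_adj_lr G).mpr h).symm

lemma shadow_adj_rr {i j : V} : ¬ (shadow G).Adj (Sum.inr i) (Sum.inr j) := by
  simp only [shadow, SimpleGraph.fromRel_adj]
  rintro ⟨-, h | h⟩ <;> exact h

end Aux

/-- If `G` is J-colourable then its shadow graph is J-colourable with the same
J-colouring number. -/
theorem shadow_JNum {V : Type*} (G : SimpleGraph V) (k : ℕ) (h : JNum G k) :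
    JColorable (shadow G) ∧ JNum (shadow G) k := by
  obtain ⟨⟨c, hp, hr⟩, hmax⟩ := h
  -- forward: shadow coloring
  have hfwd : ∃ c' : V ⊕ V → Fin k, IsProperCol (shadow G) c' ∧ IsRainbowCol (shadow G) c' := by
    refine ⟨Sum.elim c c, ?_, ?_⟩
    · rintro (x | x) (y | y) hadj
      · exact hp ((shadow_adj_ll G).mp hadj)
      · exact hp ((shadow_adj_lr G).mp hadj)
      · exact fun he => hp ((shadow_adj_rl G).mp hadj) he.symm
      · exact absurd hadj (shadow_adj_rr G)
    · rintro (v | v) i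
      · obtain ⟨u, hu | hu, hcu⟩ := hr v i
        · exact ⟨Sum.inl u, Or.inl (by rw [hu]), hcu⟩
        · exact ⟨Sum.inl u, Or.inr ((shadow_adj_ll G).mpr hu), hcu⟩
      · obtain ⟨u, hu | hu, hcu⟩ := hr v i
        · exact ⟨Sum.inr u, Or.inl (by rw [hu]), hcu⟩
        · exact ⟨Sum.inl u, Or.inr ((shadow_adj_rl G).mpr hu.symm), hcu⟩
  -- backward: any shadow coloring restricts
  have hbwd : ∀ m, (∃ c' : V ⊕ V → Fin m, IsProperCol (shadow G) c' ∧
      IsRainbowCol (shadow G) c') → m ≤ k := by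
    rintro m ⟨c', hp', hr'⟩
    refine hmax m ⟨fun v => c' (Sum.inl v), ?_, ?_⟩
    · intro x y hxy
      exact hp' ((shadow_adj_ll G).mpr hxy)
    · intro v i
      obtain ⟨u, hu | hu, hcu⟩ := hr' (Sum.inr v) i
      · -- u = inr v : show c' (inr v) = c' (inl v)
        subst hu
        have key : c' (Sum.inr v) = c' (Sum.inl v) := by
          obtain ⟨w, hw | hw, hcw⟩ := hr' (Sum.inr v) (c' (Sum.inl v))
          · rcases w with j | j
            · exact absurd hw (by simp)
            · rw [← hcw]; congr 1; exact Sum.inr.inj hw ▸ rfl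
          · rcases w with j | j
            · exact absurd hcw (hp' ((shadow_adj_ll G).mpr ((shadow_adj_rl G).mp hw).symm)).symm
            · exact absurd hw (shadow_adj_rr G)
        exact ⟨v, Or.inl rfl, key.symm.trans hcu⟩
      · rcases u with j | j
        · exact ⟨j, Or.inr ((shadow_adj_rl G).mp hu).symm, hcu⟩
        · exact absurd hu (shadow_adj_rr G)
  exact ⟨⟨k, hfwd⟩, hfwd, hbwd⟩
end

section
/- If G is triangle-free, then the Federico graph F(G) is triangle-free. -/
open SimpleGraph

/-- The Federico graph of `G`: vertices `Sum.inl i = vᵢ`, `Sum.inr (Sum.inl i) = uᵢ`,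
`Sum.inr (Sum.inr i) = wᵢ`; edges `vᵢvⱼ`, `wᵢwⱼ`, `uᵢwⱼ` whenever `vᵢvⱼ ∈ E(G)`,
plus `vᵢuᵢ` for each `i`. -/
def federico {V : Type*} (G : SimpleGraph V) : SimpleGraph (V ⊕ V ⊕ V) :=
  SimpleGraph.fromRel (fun a b => match a, b with
    | Sum.inl i, Sum.inl j => G.Adj i j
    | Sum.inr (Sum.inr i), Sum.inr (Sum.inr j) => G.Adj i j
    | Sum.inr (Sum.inl i), Sum.inr (Sum.inr j) => G.Adj i j
    | Sum.inl i, Sum.inr (Sum.inl j) => i = j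
    | _, _ => False)

/-- If `G` is triangle-free, then the Federico graph `F(G)` is triangle-free. -/
theorem federico_triangleFree {V : Type*} (G : SimpleGraph V) (h : G.CliqueFree 3) :
    (federico G).CliqueFree 3 := by
  classical
  have hG : ∀ a b c : V, G.Adj a b → G.Adj a c → G.Adj b c → False := by
    intro a b c hab hac hbc
    exact h {a, b, c} (is3Clique_triple_iff.2 ⟨hab, hac, hbc⟩)
  intro s hs
  rw [is3Clique_iff] at hs
  obtain ⟨a, b, c, hab, hac, hbc, -⟩ := hs
  rcases a with i | i | i <;> rcases b with j | j | j <;> rcases c with k | k | k <;>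
    simp only [federico, fromRel_adj, ne_eq] at hab hac hbc <;>
    obtain ⟨-, hab⟩ := hab <;> obtain ⟨-, hac⟩ := hac <;> obtain ⟨-, hbc⟩ := hbc <;>
    rcases hab with hab | hab <;> rcases hac with hac | hac <;> rcases hbc with hbc | hbc <;>
    simp_all <;>
    first
      | exact hG _ _ _ hab hac hbc
      | exact hG _ _ _ hab.symm hac hbc
      | exact hG _ _ _ hab hac.symm hbc
      | exact hG _ _ _ hab hac hbc.symm
      | exact hG _ _ _ hab.symm hac.symm hbc
      | exact hG _ _ _ hab.symm hac hbc.symm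
      | exact hG _ _ _ hab hac.symm hbc.symm
      | exact hG _ _ _ hab.symm hac.symm hbc.symm
end

section
/- For any graph G, the chromatic number of its Federico graph equals the chromatic number of G: χ(F(G)) = χ(G). -/
open SimpleGraph

/-!
On the vertices `vᵢ` the Federico graph contains `G`, so `χ(G) ≤ χ(F(G))`. Conversely, the `uᵢ`
and `wᵢ` can simply copy a colouring `c` of `G`, and the only new constraint on `vᵢ` is the edge
`vᵢuᵢ`: colour `vᵢ` by `σ (c i)` for a fixed-point-free permutation `σ` of the colours, which
exists because `G` has an edge and hence every colouring uses at least two colours.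
-/

lemma finRotate_apply_ne_self {n : ℕ} (hn : 2 ≤ n) (a : Fin n) : finRotate n a ≠ a :=
  Equiv.Perm.mem_support.mp (by simp [support_finRotate_of_le hn])

namespace SimpleGraph

variable {V α : Type*} {G : SimpleGraph V}

def federicoInlHom : G →g federico G where
  toFun := Sum.inl
  map_rel' h := by simp [federico, h.ne, h]

def Coloring.federico (C : G.Coloring α) (σ : Equiv.Perm α) (hσ : ∀ a, σ a ≠ a) :
    (federico G).Coloring α :=
  Coloring.mk (Sum.elim (σ ∘ C) (Sum.elim C C)) <| by
    rintro (i | i | i) (j | j | j) h <;>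
      simp_all [_root_.federico, G.adj_comm j i, C.valid, (hσ _).symm]

lemma Colorable.federico {n : ℕ} (hG : G.Colorable n) (hn : 2 ≤ n) :
    (federico G).Colorable n :=
  let ⟨C⟩ := hG
  ⟨C.federico (finRotate n) (finRotate_apply_ne_self hn)⟩

lemma Colorable.two_le_of_adj {n : ℕ} {u v : V} (hG : G.Colorable n) (huv : G.Adj u v) :
    2 ≤ n := by
  exact_mod_cast (two_le_chromaticNumber_of_adj huv).trans hG.chromaticNumber_le

lemma chromaticNumber_federico {u v : V} (huv : G.Adj u v) :
    (federico G).chromaticNumber = G.chromaticNumber :=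
  le_antisymm (chromaticNumber_le_of_forall_imp fun _ hG => hG.federico (hG.two_le_of_adj huv))
    (chromaticNumber_mono_of_hom federicoInlHom)

end SimpleGraph

theorem federico_chromaticNumber_general {V : Type*} [Nontrivial V]
    (G : SimpleGraph V) (hc : G.Connected) :
    (federico G).chromaticNumber = G.chromaticNumber :=
  let ⟨_, huv⟩ := hc.preconnected.exists_adj_of_nontrivial (Classical.arbitrary V)
  chromaticNumber_federico huv

/-- The chromatic number of the Federico graph equals that of `G`
(`G` a connected graph on at least two vertices, as assumed throughout the paper). -/
theorem federico_chromaticNumber {V : Type*} [Fintype V] [Nontrivial V]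
    (G : SimpleGraph V) (hc : G.Connected) :
    (federico G).chromaticNumber = G.chromaticNumber :=
  federico_chromaticNumber_general G hc
end

section
/- For any graph G, the circular chromatic number of its Federico graph equals that of G: χ_c(F(G)) = χ_c(G). -/
open SimpleGraph

/-- A `(k,d)`-colouring of `G`. -/
def IsKDColoring {V : Type*} (G : SimpleGraph V) (k d : ℕ) (f : V → ℕ) : Prop :=
  (∀ v, f v < k) ∧ ∀ u v, G.Adj u v →
    (d : ℤ) ≤ min |(f u : ℤ) - (f v : ℤ)| ((k : ℤ) - |(f u : ℤ) - (f v : ℤ)|)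

/-- The set of ratios `k/d` over all `(k,d)`-colourings of `G`; its infimum is the
circular chromatic number of `G`. -/
def circSet {V : Type*} (G : SimpleGraph V) : Set ℝ :=
  {q | ∃ k d : ℕ, 0 < d ∧ 2 * d ≤ k ∧ (∃ f, IsKDColoring G k d f) ∧ q = (k : ℝ) / d}


private lemma modAux (a d k : ℕ) (ha : a < k) (hd : d ≤ k) :
    (a + d) % k = a + d ∨ (a + d) % k + k = a + d := by
  rcases Nat.lt_or_ge (a + d) k with h | h
  · exact Or.inl (Nat.mod_eq_of_lt h)
  · right
    rw [Nat.mod_eq_sub_mod h, Nat.mod_eq_of_lt (by omega)]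
    omega

private lemma circAux (k d A B : ℤ) (hB1 : -k < B) (hB2 : B < k)
    (hAB : B = A ∨ B = A + k ∨ B = A - k)
    (h : d ≤ min |A| (k - |A|)) : d ≤ min |B| (k - |B|) := by
  rcases abs_cases A with ⟨hA, _⟩ | ⟨hA, _⟩ <;>
  rcases abs_cases B with ⟨hB, _⟩ | ⟨hB, _⟩ <;>
  rw [hA] at h <;> rw [hB] <;> omega

private lemma federico_adj_inl {V : Type*} (G : SimpleGraph V) {u v : V}
    (h : G.Adj u v) : (federico G).Adj (Sum.inl u) (Sum.inl v) := by
  rw [federico, SimpleGraph.fromRel_adj]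
  exact ⟨by simp [h.ne], Or.inl h⟩

/-- The circular chromatic number of the Federico graph equals that of `G`
(`G` a connected graph on at least two vertices, as assumed throughout the paper). -/
theorem federico_circularChromatic {V : Type*} [Fintype V] [Nontrivial V]
    (G : SimpleGraph V) (hc : G.Connected) :
    sInf (circSet (federico G)) = sInf (circSet G) := by
  have hset : circSet (federico G) = circSet G := by
    ext q
    constructor
    · rintro ⟨k, d, hd, hk, ⟨f, hf1, hf2⟩, rfl⟩
      exact ⟨k, d, hd, hk, ⟨fun v => f (Sum.inl v), fun v => hf1 _,
        fun u v h => hf2 _ _ (federico_adj_inl G h)⟩, rfl⟩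
    · rintro ⟨k, d, hd, hk, ⟨f, hf1, hf2⟩, rfl⟩
      have hk0 : 0 < k := by omega
      refine ⟨k, d, hd, hk, ⟨fun x => match x with
        | Sum.inl i => (f i + d) % k
        | Sum.inr (Sum.inl i) => f i
        | Sum.inr (Sum.inr i) => f i, ?_, ?_⟩, rfl⟩
      · rintro (i | i | i)
        · exact Nat.mod_lt _ hk0
        · exact hf1 i
        · exact hf1 i
      · rintro (i | i | i) (j | j | j) hadj <;>
          rw [federico, SimpleGraph.fromRel_adj] at hadj <;>
          obtain ⟨hne, h⟩ := hadj <;>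
          simp only at h
        · -- inl inl
          have hij : G.Adj i j := h.elim id (fun h' => h'.symm)
          have h2 := hf2 i j hij
          have b1 := hf1 i
          have b2 := hf1 j
          have m1 := modAux (f i) d k (hf1 i) (by omega)
          have m2 := modAux (f j) d k (hf1 j) (by omega)
          have c1 : (f i + d) % k < k := Nat.mod_lt _ hk0
          have c2 : (f j + d) % k < k := Nat.mod_lt _ hk0
          show (d:ℤ) ≤ min |(((f i + d) % k : ℕ):ℤ) - (((f j + d) % k : ℕ):ℤ)|
            ((k:ℤ) - |(((f i + d) % k : ℕ):ℤ) - (((f j + d) % k : ℕ):ℤ)|)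
          refine circAux k d ((f i : ℤ) - (f j : ℤ)) _ ?_ ?_ ?_ h2 <;>
            rcases m1 with m1 | m1 <;> rcases m2 with m2 | m2 <;> omega
        · -- inl, inr inl : i = j
          have hij : i = j := h.elim id (fun h' => h'.elim)
          subst hij
          have b1 := hf1 i
          have m1 := modAux (f i) d k (hf1 i) (by omega)
          have c1 : (f i + d) % k < k := Nat.mod_lt _ hk0
          show (d:ℤ) ≤ min |(((f i + d) % k : ℕ):ℤ) - ((f i : ℕ):ℤ)|
            ((k:ℤ) - |(((f i + d) % k : ℕ):ℤ) - ((f i : ℕ):ℤ)|)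
          rcases m1 with m1 | m1 <;>
            rcases abs_cases ((((f i + d) % k : ℕ) : ℤ) - ((f i : ℕ) : ℤ)) with ⟨hx, _⟩ | ⟨hx, _⟩ <;>
            rw [hx] <;> omega
        · exact absurd h (by simp)
        · -- inr inl, inl : j = i
          have hij : j = i := h.elim (fun h' => h'.elim) id
          subst hij
          have b1 := hf1 j
          have m1 := modAux (f j) d k (hf1 j) (by omega)
          have c1 : (f j + d) % k < k := Nat.mod_lt _ hk0
          show (d:ℤ) ≤ min |((f j : ℕ):ℤ) - (((f j + d) % k : ℕ):ℤ)|
            ((k:ℤ) - |((f j : ℕ):ℤ) - (((f j + d) % k : ℕ):ℤ)|)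
          rcases m1 with m1 | m1 <;>
            rcases abs_cases (((f j : ℕ) : ℤ) - (((f j + d) % k : ℕ) : ℤ)) with ⟨hx, _⟩ | ⟨hx, _⟩ <;>
            rw [hx] <;> omega
        · exact absurd h (by simp)
        · -- inr inl, inr inr : Adj i j
          exact hf2 i j (h.elim id (fun h' => h'.elim))
        · exact absurd h (by simp)
        · -- inr inr, inr inl : Adj j i
          have h2 := hf2 j i (h.elim (fun h' => h'.elim) id)
          rwa [abs_sub_comm] at h2
        · -- inr inr, inr inr
          exact hf2 i j (h.elim id (fun h' => h'.symm))
  rw [hset]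
end

section
/- If a graph G has a (k,d)-coloring, then its Federico graph F(G) also has a (k,d)-coloring. -/
open SimpleGraph

lemma minabs_iff (d k x : ℤ) (hd : 0 ≤ d) :
    d ≤ min |x| (k - |x|) ↔ ((d ≤ x ∧ x ≤ k - d) ∨ (d ≤ -x ∧ -x ≤ k - d)) := by
  rcases abs_cases x with ⟨e, he⟩ | ⟨e, he⟩ <;> rw [e, le_min_iff] <;> omega

lemma key1 (k d a b : ℕ) (hd : 0 < d) (hkd : 2*d ≤ k) (ha : a < k) (hb : b < k)
    (h : (d:ℤ) ≤ min |(a:ℤ) - (b:ℤ)| ((k:ℤ) - |(a:ℤ) - (b:ℤ)|)) :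
    (d:ℤ) ≤ min |(((a+d)%k : ℕ):ℤ) - (((b+d)%k : ℕ):ℤ)|
      ((k:ℤ) - |(((a+d)%k : ℕ):ℤ) - (((b+d)%k : ℕ):ℤ)|) := by
  rw [minabs_iff _ _ _ (by positivity)] at h ⊢
  have e1 : (a+d) % k = if a + d < k then a + d else a + d - k := by
    split <;> rename_i h'
    · exact Nat.mod_eq_of_lt h'
    · rw [Nat.mod_eq_sub_mod (by omega), Nat.mod_eq_of_lt (by omega)]
  have e2 : (b+d) % k = if b + d < k then b + d else b + d - k := by
    split <;> rename_i h'
    · exact Nat.mod_eq_of_lt h'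
    · rw [Nat.mod_eq_sub_mod (by omega), Nat.mod_eq_of_lt (by omega)]
  rw [e1, e2]
  split <;> split <;> omega

lemma key2 (k d a : ℕ) (hd : 0 < d) (hkd : 2*d ≤ k) (ha : a < k) :
    (d:ℤ) ≤ min |(((a+d)%k : ℕ):ℤ) - (a:ℤ)| ((k:ℤ) - |(((a+d)%k : ℕ):ℤ) - (a:ℤ)|) := by
  rw [minabs_iff _ _ _ (by positivity)]
  have e1 : (a+d) % k = if a + d < k then a + d else a + d - k := by
    split <;> rename_i h'
    · exact Nat.mod_eq_of_lt h'
    · rw [Nat.mod_eq_sub_mod (by omega), Nat.mod_eq_of_lt (by omega)]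
  rw [e1]
  split <;> omega

/-- If `G` has a `(k,d)`-colouring, then so does its Federico graph. -/
theorem federico_kd_coloring {V : Type*} (G : SimpleGraph V) (k d : ℕ) (hd : 0 < d)
    (hkd : 2 * d ≤ k) (f : V → ℕ) (hf : IsKDColoring G k d f) :
    ∃ g : V ⊕ V ⊕ V → ℕ, IsKDColoring (federico G) k d g := by
  obtain ⟨hlt, hadj⟩ := hf
  have hk : 0 < k := by omega
  refine ⟨fun x => match x with
    | Sum.inl i => (f i + d) % k
    | Sum.inr (Sum.inl i) => f i
    | Sum.inr (Sum.inr i) => f i, ?_, ?_⟩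
  · rintro (i | i | i)
    · exact Nat.mod_lt _ hk
    · exact hlt i
    · exact hlt i
  · rintro (i | i | i) (j | j | j) hij <;>
      rw [federico, SimpleGraph.fromRel_adj] at hij <;>
      obtain ⟨hne, hij | hij⟩ := hij <;> simp only at hij <;> dsimp only
    · exact key1 k d (f i) (f j) hd hkd (hlt i) (hlt j) (hadj i j hij)
    · exact key1 k d (f i) (f j) hd hkd (hlt i) (hlt j) (hadj i j hij.symm)
    · subst hij; exact key2 k d (f i) hd hkd (hlt i)
    · subst hij; rw [abs_sub_comm]; exact key2 k d (f j) hd hkd (hlt j)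
    · exact hadj i j hij
    · exact hadj i j hij.symm
    · exact hadj i j hij
    · exact hadj i j hij.symm
end

section
/- For any graph G, the minimum degree of the Federico graph satisfies δ(F(G)) = δ(G) + 1. -/
open SimpleGraph

/-! In `F(G)` the vertices `vᵢ` and `uᵢ` have degree `deg vᵢ + 1` and `wᵢ` has degree
`2 deg vᵢ`, which is at least `deg vᵢ + 1` since `G` has no isolated vertices; the minimum is
attained at `vᵢ` for a vertex of minimum degree of `G`. -/

namespace SimpleGraph

open Finset

variable {V : Type*} [Fintype V] (G : SimpleGraph V) [DecidableRel G.Adj]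
  [DecidableRel (federico G).Adj]

lemma neighborFinset_federico_inl (i : V) :
    (federico G).neighborFinset (.inl i) =
      cons (.inr (.inl i)) ((G.neighborFinset i).map .inl) (by simp) := by
  ext (j | j | j) <;> rw [mem_neighborFinset] <;>
    simp +contextual [federico, G.adj_comm j i, eq_comm, G.ne_of_adj]

lemma neighborFinset_federico_inr_inl (i : V) :
    (federico G).neighborFinset (.inr (.inl i)) =
      cons (.inl i) ((G.neighborFinset i).map (.trans .inr .inr)) (by simp) := by
  ext (j | j | j) <;> rw [mem_neighborFinset] <;> simp [federico, eq_comm]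

lemma neighborFinset_federico_inr_inr (i : V) :
    (federico G).neighborFinset (.inr (.inr i)) =
      ((G.neighborFinset i).disjSum (G.neighborFinset i)).map .inr := by
  ext (j | j | j) <;> rw [mem_neighborFinset] <;>
    simp +contextual [federico, G.adj_comm j i, G.ne_of_adj]

lemma degree_federico_inl (i : V) : (federico G).degree (.inl i) = G.degree i + 1 := by
  rw [← card_neighborFinset_eq_degree, neighborFinset_federico_inl, card_cons, card_map,
    card_neighborFinset_eq_degree]

lemma degree_federico_inr_inl (i : V) :
    (federico G).degree (.inr (.inl i)) = G.degree i + 1 := by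
  rw [← card_neighborFinset_eq_degree, neighborFinset_federico_inr_inl, card_cons, card_map,
    card_neighborFinset_eq_degree]

lemma degree_federico_inr_inr (i : V) :
    (federico G).degree (.inr (.inr i)) = 2 * G.degree i := by
  rw [← card_neighborFinset_eq_degree, neighborFinset_federico_inr_inr, card_map, card_disjSum,
    card_neighborFinset_eq_degree, two_mul]

end SimpleGraph

theorem federico_minDegree_general {V : Type*} [Fintype V] (G : SimpleGraph V)
    [DecidableRel G.Adj] (h : 1 ≤ G.minDegree) :
    @SimpleGraph.minDegree (V ⊕ V ⊕ V) (federico G) _ (Classical.decRel _) =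
      G.minDegree + 1 := by
  classical
  rcases isEmpty_or_nonempty V with _ | _
  · simp [minDegree_of_subsingleton] at h
  obtain ⟨v, hv⟩ := G.exists_minimal_degree_vertex
  refine le_antisymm ?_ (le_minDegree_of_forall_le_degree _ _ ?_)
  · calc _ ≤ (federico G).degree (.inl v) := minDegree_le_degree _ _
      _ = G.minDegree + 1 := by rw [degree_federico_inl, hv]
  · rintro (i | i | i)
    · simpa [degree_federico_inl] using G.minDegree_le_degree i
    · simpa [degree_federico_inr_inl] using G.minDegree_le_degree i
    · have := G.minDegree_le_degree i
      rw [degree_federico_inr_inr]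
      omega

/-- For a graph `G` with no isolated vertices, `δ(F(G)) = δ(G) + 1`. -/
theorem federico_minDegree {V : Type*} [Fintype V] [Nonempty V] (G : SimpleGraph V)
    [DecidableRel G.Adj] (h : 1 ≤ G.minDegree) :
    @SimpleGraph.minDegree (V ⊕ V ⊕ V) (federico G) _ (Classical.decRel _) =
      G.minDegree + 1 :=
  federico_minDegree_general G h
end

section
/- If a graph G admits a J-coloring with k colors, then k ≤ δ(G) + 1, where δ(G) is the minimum degree of G. -/
open SimpleGraph

/-- If `G` admits a J-colouring with `k` colours, then `k ≤ δ(G) + 1`. -/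
theorem jColoring_le_minDegree {V : Type*} [Fintype V] [Nonempty V] (G : SimpleGraph V)
    [DecidableRel G.Adj] (k : ℕ) (c : V → Fin k) (hp : IsProperCol G c)
    (hr : IsRainbowCol G c) : k ≤ G.minDegree + 1 := by
  obtain ⟨v, hv⟩ := G.exists_minimal_degree_vertex
  rw [hv]
  -- injection from colors ≠ c v into neighbors of v
  have key : ∀ i : Fin k, i ≠ c v → ∃ u, G.Adj v u ∧ c u = i := by
    intro i hi
    obtain ⟨u, hu, hcu⟩ := hr v i
    rcases hu with rfl | hadj
    · exact (hi hcu.symm).elim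
    · exact ⟨u, hadj, hcu⟩
  classical
  choose f hf using key
  have hinj : Function.Injective (fun i : {i : Fin k // i ≠ c v} => f i.1 i.2) := by
    intro a b hab
    have h2 : f a.1 a.2 = f b.1 b.2 := hab
    have ha := (hf a.1 a.2).2
    have hb := (hf b.1 b.2).2
    ext
    rw [← ha, ← hb, h2]
  have hcard : Fintype.card {i : Fin k // i ≠ c v} ≤ G.degree v := by
    rw [← G.card_neighborFinset_eq_degree]
    have : ∀ i : {i : Fin k // i ≠ c v}, f i.1 i.2 ∈ G.neighborFinset v := by
      intro i; rw [SimpleGraph.mem_neighborFinset]; exact (hf i.1 i.2).1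
    calc Fintype.card {i : Fin k // i ≠ c v}
        ≤ Fintype.card (G.neighborFinset v) :=
          Fintype.card_le_of_injective (fun i => ⟨f i.1 i.2, this i⟩)
            (fun a b h => hinj (congrArg Subtype.val h))
      _ = (G.neighborFinset v).card := Fintype.card_coe _
  have : Fintype.card {i : Fin k // i ≠ c v} = k - 1 := by
    simp [Fintype.card_subtype_compl]
  omega
end

section
/- For any graph G, the chromatic number of the crib graph satisfies χ(c(G)) = χ(G) + 1. -/
open SimpleGraph

lemma crib_colorable_succ {V : Type*} (G : SimpleGraph V) {n : ℕ} (h : G.Colorable n) :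
    (crib G).Colorable (n + 1) := by
  obtain ⟨c⟩ := h
  refine ⟨SimpleGraph.Coloring.mk
    (fun x => match x with
      | Sum.inl i => (c i).castSucc
      | Sum.inr (Sum.inl i) => (c i).castSucc
      | Sum.inr (Sum.inr _) => Fin.last n) ?_⟩
  rintro (i | i | i) (j | j | j) hadj he <;>
    simp only [crib, SimpleGraph.fromRel_adj, false_or, or_false, true_or, and_false,
      and_true] at hadj
  · obtain ⟨-, h | h⟩ := hadj
    · exact c.valid h (Fin.castSucc_injective _ he)
    · exact c.valid h (Fin.castSucc_injective _ he).symm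
  · exact c.valid hadj.2 (Fin.castSucc_injective _ he)
  · exact (Fin.castSucc_lt_last _).ne he
  · exact c.valid hadj.2 (Fin.castSucc_injective _ he).symm
  · exact (Fin.castSucc_lt_last _).ne he
  · exact (Fin.castSucc_lt_last _).ne' he
  · exact (Fin.castSucc_lt_last _).ne' he

lemma colorable_of_crib {V : Type*} (G : SimpleGraph V) {m : ℕ}
    (h : (crib G).Colorable m) : ∃ k, k + 1 ≤ m ∧ G.Colorable k := by
  obtain ⟨c⟩ := h
  set a : Fin m := c (Sum.inr (Sum.inr ())) with ha
  have hv : ∀ v : V, c (Sum.inl v) ≠ a := by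
    intro v
    apply c.valid
    simp [crib, SimpleGraph.fromRel_adj]
  have hm1 : 0 < m := a.pos
  have hcard : Fintype.card {x : Fin m // x ≠ a} + 1 = m := by
    rw [Fintype.card_subtype_compl, Fintype.card_subtype_eq, Fintype.card_fin]
    omega
  refine ⟨_, hcard.le, ?_⟩
  refine SimpleGraph.Coloring.colorable (SimpleGraph.Coloring.mk
    (fun v => (⟨c (Sum.inl v), hv v⟩ : {x : Fin m // x ≠ a})) ?_)
  intro x y hxy he
  refine c.valid (v := Sum.inl x) (w := Sum.inl y) ?_ (congrArg Subtype.val he)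
  simp only [crib, SimpleGraph.fromRel_adj]
  exact ⟨fun h' => (G.ne_of_adj hxy) (by injection h'), Or.inl hxy⟩

/-- For any graph `G`, the chromatic number of the crib graph satisfies
`χ(c(G)) = χ(G) + 1`. -/
theorem crib_chromaticNumber {V : Type*} [Fintype V] (G : SimpleGraph V) :
    (crib G).chromaticNumber = G.chromaticNumber + 1 := by
  have hGfin : G.Colorable (Fintype.card V) := G.colorable_of_fintype
  have hG := G.colorable_chromaticNumber_of_fintype
  set n := ENat.toNat G.chromaticNumber with hn
  have hχG : G.chromaticNumber = (n : ℕ∞) := by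
    rw [hn, ENat.coe_toNat]
    exact (SimpleGraph.chromaticNumber_ne_top_iff_exists).2 ⟨_, hGfin⟩
  have hcrib := (crib G).colorable_chromaticNumber_of_fintype
  set m := ENat.toNat (crib G).chromaticNumber with hm
  have hχC : (crib G).chromaticNumber = (m : ℕ∞) := by
    rw [hm, ENat.coe_toNat]
    exact (SimpleGraph.chromaticNumber_ne_top_iff_exists).2
      ⟨_, (crib G).colorable_of_fintype⟩
  rw [hχG, hχC]
  apply le_antisymm
  · have h1 := (crib_colorable_succ G hG).chromaticNumber_le
    rw [hχC, Nat.cast_le] at h1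
    exact_mod_cast Nat.cast_le.mpr h1
  · obtain ⟨k, hk, hcol⟩ := colorable_of_crib G hcrib
    have h2 := hcol.chromaticNumber_le
    rw [hχG, Nat.cast_le] at h2
    exact_mod_cast Nat.cast_le.mpr (show n + 1 ≤ m by omega)
end
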